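/- Let γ = c·ϑ_a with c a unit of O and a ∈ {2,…,(p−1)/2}, and let x, y, z ≥ i. Then J_γ(e_x, e_y, e_z) ∈ 𝔭^{x+y+z+1} if and only if a^{3i}(1−a)^{2i}·f(x,y,z) + a^{2i}(1−a)^{3i}·g(x,y,z) ≡ 0 mod p. -/

import Mathlib

open Polynomial Algebra

set_option linter.unusedSectionVars false
set_option linter.unusedVariables false
set_option maxHeartbeats 1000000


/-!
Setting: `p ≥ 5` prime, `K = ℚ_p(θ)` with `θ` a primitive `p`-th root of unity,
`O` the ring of integers (maximal order) of `K`, i.e. the integral closure of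
`ℤ_p` in `K`, and `𝔭` its unique maximal ideal, generated by `κ = θ - 1`,
so that `𝔭^n = κ^n · O` (also for `n : ℤ`).
-/

/-- The maximal order `O` of `K`: the integral closure of `ℤ_p` in `K`. -/
noncomputable def RO (p : ℕ) [Fact p.Prime] (K : Type) [Field K] [Algebra ℤ_[p] K] :
    Subalgebra ℤ_[p] K :=
  integralClosure ℤ_[p] K

/-- The ideal `𝔭^n = κ^n · O` (for `n : ℤ`), where `κ = θ - 1`;
membership `x ∈ 𝔭^n` is encoded as `κ^(-n) * x ∈ O`. -/
def Pp (p : ℕ) [Fact p.Prime] (K : Type) [Field K] [Algebra ℤ_[p] K]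
    (θ : K) (n : ℤ) : Submodule ℤ_[p] K where
  carrier := {x : K | (θ - 1) ^ (-n) * x ∈ RO p K}
  add_mem' := by
    intro a b ha hb
    simp only [Set.mem_setOf_eq, mul_add] at *
    exact add_mem ha hb
  zero_mem' := by
    simp only [Set.mem_setOf_eq, mul_zero]
    exact zero_mem _
  smul_mem' := by
    intro c x hx
    simp only [Set.mem_setOf_eq, Algebra.smul_def] at *
    rw [mul_left_comm]
    exact mul_mem (Subalgebra.algebraMap_mem _ c) hx

open scoped Classical in
/-- The valuation `val : K → ℤ ∪ {∞}` with `val κ = 1`: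
`val x = n` iff `x ∈ 𝔭^n \ 𝔭^(n+1)`, and `val 0 = ∞`. -/
noncomputable def valK (p : ℕ) [Fact p.Prime] (K : Type) [Field K]
    [Algebra ℤ_[p] K] (θ : K) (x : K) : WithTop ℤ :=
  if h : ∃ z : ℤ, x ∈ Pp p K θ z ∧ x ∉ Pp p K θ (z + 1) then (h.choose : ℤ) else ⊤

/-- The Jacobi element `J_γ(u,v,w) = γ(γ(u∧v)∧w) + γ(γ(v∧w)∧u) + γ(γ(w∧u)∧v)`. -/
def Jg (K : Type) [Field K] (γ : K → K → K) (u v w : K) : K :=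
  γ (γ u v) w + γ (γ v w) u + γ (γ w u) v

/-- The ideal `J(γ)` of `O` generated by the Jacobi elements
`J_γ(u,v,w)` for `u, v, w ∈ 𝔭^i` (encoded as the set of `O`-linear
combinations of Jacobi elements). -/
def JIdealSet (p : ℕ) [Fact p.Prime] (K : Type) [Field K] [Algebra ℤ_[p] K]
    (θ : K) (i : ℕ) (γ : K → K → K) : Set K :=
  {z : K | ∃ (n : ℕ) (c s : Fin n → K), (∀ t, c t ∈ RO p K) ∧
    (∀ t, ∃ u ∈ Pp p K θ i, ∃ v ∈ Pp p K θ i, ∃ w ∈ Pp p K θ i, Jg K γ u v w = s t) ∧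
    z = ∑ t, c t * s t}

/-- The map `ϑ_a(x ∧ y) = σ_a(x)σ_{1-a}(y) − σ_{1-a}(x)σ_a(y)`, for given
Galois automorphisms `σa = σ_a` and `σb = σ_{1-a}`. -/
noncomputable def vth (p : ℕ) [Fact p.Prime] (K : Type) [Field K] [Algebra ℚ_[p] K]
    (σa σb : K ≃ₐ[ℚ_[p]] K) (x y : K) : K :=
  σa x * σb y - σb x * σa y


section Aux

variable (p : ℕ) [Fact p.Prime] (K : Type) [Field K]
  [Algebra ℚ_[p] K] [Algebra ℤ_[p] K] [IsScalarTower ℤ_[p] ℚ_[p] K]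

theorem theta_int {θ : K} (hθ : IsPrimitiveRoot θ p) : IsIntegral ℤ_[p] θ := by
  refine ⟨X ^ p - C 1, monic_X_pow_sub_C 1 (Fact.out : p.Prime).ne_zero, ?_⟩
  simp [hθ.pow_eq_one]

theorem kappa_int {θ : K} (hθ : IsPrimitiveRoot θ p) : IsIntegral ℤ_[p] (θ - 1) :=
  (theta_int p K hθ).sub isIntegral_one

/-- The Eisenstein polynomial over `ℤ_[p]`. -/
noncomputable def Epoly : ℤ_[p][X] := (cyclotomic p ℤ_[p]).comp (X + 1)

theorem Epoly_monic : (Epoly p).Monic := by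
  refine (cyclotomic.monic p ℤ_[p]).comp (by simpa using monic_X_add_C (1 : ℤ_[p])) ?_
  simp [show (X + 1 : ℤ_[p][X]) = X + C 1 by simp, natDegree_X_add_C]

theorem Epoly_natDegree : (Epoly p).natDegree = p - 1 := by
  rw [Epoly, natDegree_comp, natDegree_cyclotomic, Nat.totient_prime (Fact.out : p.Prime),
    show (X + 1 : ℤ_[p][X]) = X + C 1 by simp, natDegree_X_add_C, mul_one]

theorem Epoly_eq_map : Epoly p = ((cyclotomic p ℤ).comp (X + 1)).map (Int.castRingHom ℤ_[p]) := by
  rw [Polynomial.map_comp, map_cyclotomic]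
  simp [Epoly]

theorem Fpoly_natDegree : ((cyclotomic p ℤ).comp (X + 1)).natDegree = p - 1 := by
  rw [natDegree_comp, natDegree_cyclotomic, Nat.totient_prime (Fact.out : p.Prime),
    show (X + 1 : ℤ[X]) = X + C 1 by simp, natDegree_X_add_C, mul_one]

theorem Fpoly_coeff_zero : ((cyclotomic p ℤ).comp (X + 1)).coeff 0 = p := by
  rw [coeff_zero_eq_eval_zero, eval_comp]
  simp [eval_one_cyclotomic_prime]

theorem Epoly_isEisenstein :
    (Epoly p).IsEisensteinAt (Submodule.span ℤ_[p] {(p : ℤ_[p])}) := by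
  have hZ := cyclotomic_comp_X_add_one_isEisensteinAt p
  have hpu : ¬IsUnit (p : ℤ_[p]) := (PadicInt.prime_p).not_unit
  have hsp : Submodule.span ℤ_[p] {(p : ℤ_[p])} = Ideal.span {(p : ℤ_[p])} := rfl
  constructor
  · rw [(Epoly_monic p).leadingCoeff, hsp, Ideal.mem_span_singleton]
    exact fun h => hpu (isUnit_of_dvd_one h)
  · intro n hn
    rw [Epoly_natDegree, ← Fpoly_natDegree p] at hn
    have h2 := hZ.mem hn
    rw [show Submodule.span ℤ {(p:ℤ)} = Ideal.span {(p:ℤ)} from rfl,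
      Ideal.mem_span_singleton] at h2
    rw [Epoly_eq_map, coeff_map, hsp, Ideal.mem_span_singleton]
    obtain ⟨m, hm⟩ := h2
    exact ⟨(m : ℤ_[p]), by rw [hm, Int.castRingHom, eq_intCast]; push_cast; ring⟩
  · rw [hsp, Ideal.span_singleton_pow, Ideal.mem_span_singleton, Epoly_eq_map, coeff_map,
      Fpoly_coeff_zero]
    intro h
    have hp0 : (p : ℤ_[p]) ≠ 0 := (PadicInt.prime_p).ne_zero
    simp only [map_natCast] at h
    have : (p : ℤ_[p]) * (p : ℤ_[p]) ∣ (p : ℤ_[p]) * 1 := by rwa [mul_one, ← sq]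
    exact hpu (isUnit_of_dvd_one ((mul_dvd_mul_iff_left hp0).mp this))

theorem minpoly_kappa {θ : K} (hθ : IsPrimitiveRoot θ p) :
    minpoly ℤ_[p] (θ - 1) = Epoly p := by
  have hp1 : 1 < p := (Fact.out : p.Prime).one_lt
  have hκint : IsIntegral ℤ_[p] (θ - 1) := kappa_int p K hθ
  -- the minimal polynomial over ℚ_[p]
  have hEirr : Irreducible (Epoly p) := by
    refine (Epoly_isEisenstein p).irreducible ?_ (Epoly_monic p).isPrimitive ?_
    · rw [show Submodule.span ℤ_[p] {(p : ℤ_[p])} = Ideal.span {(p : ℤ_[p])} from rfl]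
      exact (Ideal.span_singleton_prime (PadicInt.prime_p).ne_zero).2 PadicInt.prime_p
    · rw [Epoly_natDegree]; omega
  have hmapirr : Irreducible ((Epoly p).map (algebraMap ℤ_[p] ℚ_[p])) :=
    ((Epoly_monic p).irreducible_iff_irreducible_map_fraction_map).1 hEirr
  have hroot : Polynomial.aeval (θ - 1) ((Epoly p).map (algebraMap ℤ_[p] ℚ_[p])) = 0 := by
    rw [aeval_map_algebraMap]
    rw [Epoly, aeval_comp]
    simp only [map_add, aeval_X, aeval_one, sub_add_cancel]
    have : Polynomial.aeval θ (cyclotomic p ℤ_[p]) =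
        Polynomial.eval θ (cyclotomic p K) := by
      rw [← map_cyclotomic p (algebraMap ℤ_[p] K), aeval_def, eval_map]
    rw [this]
    exact (hθ.isRoot_cyclotomic (Fact.out : p.Prime).pos).eq_zero
  have hminQ : minpoly ℚ_[p] (θ - 1) = (Epoly p).map (algebraMap ℤ_[p] ℚ_[p]) :=
    (minpoly.eq_of_irreducible_of_monic hmapirr hroot ((Epoly_monic p).map _)).symm
  have h2 : (minpoly ℤ_[p] (θ - 1)).map (algebraMap ℤ_[p] ℚ_[p]) =
      (Epoly p).map (algebraMap ℤ_[p] ℚ_[p]) := by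
    rw [← minpoly.isIntegrallyClosed_eq_field_fractions' ℚ_[p] hκint, hminQ]
  exact Polynomial.map_injective _ (IsFractionRing.injective ℤ_[p] ℚ_[p]) h2

theorem RO_le_adjoin {θ : K} (hθ : IsPrimitiveRoot θ p)
    (hgen : Algebra.adjoin ℚ_[p] {θ} = ⊤) {w : K} (hw : IsIntegral ℤ_[p] w) :
    w ∈ Algebra.adjoin ℤ_[p] ({θ - 1} : Set K) := by
  have hp1 : 1 < p := (Fact.out : p.Prime).one_lt
  have hκint : IsIntegral ℤ_[p] (θ - 1) := kappa_int p K hθ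
  have hκintQ : IsIntegral ℚ_[p] (θ - 1) := hκint.tower_top
  have htop : Algebra.adjoin ℚ_[p] ({θ - 1} : Set K) = ⊤ := by
    rw [_root_.eq_top_iff, ← hgen]
    apply Algebra.adjoin_le
    intro t ht
    have ht' : t = θ := ht
    subst ht'
    have h9 := add_mem (Algebra.subset_adjoin (Set.mem_singleton (t - 1)))
      (one_mem (Algebra.adjoin ℚ_[p] ({t - 1} : Set K)))
    simpa using h9
  -- power basis with generator θ - 1
  let B0 := Algebra.adjoin.powerBasis hκintQ
  let eq1 : Algebra.adjoin ℚ_[p] ({θ - 1} : Set K) ≃ₐ[ℚ_[p]] K :=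
    (Subalgebra.equivOfEq _ _ htop).trans Subalgebra.topEquiv
  let B : PowerBasis ℚ_[p] K := B0.map eq1
  have hBgen : B.gen = θ - 1 := by
    simp [B, B0, eq1, Algebra.adjoin.powerBasis, PowerBasis.map]
  haveI : FiniteDimensional ℚ_[p] K := B.finite
  haveI : Algebra.IsIntegral ℚ_[p] K := Algebra.IsIntegral.of_finite _ _
  have hBint : IsIntegral ℤ_[p] B.gen := hBgen ▸ hκint
  -- discriminant
  have hdint : IsIntegral ℤ_[p] (Algebra.discr ℚ_[p] B.basis) := by
    refine Algebra.discr_isIntegral ℚ_[p] fun i => ?_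
    rw [B.basis_eq_pow i]
    exact hBint.pow _
  obtain ⟨d, hd⟩ := IsIntegrallyClosed.isIntegral_iff.1 hdint
  have hd0 : d ≠ 0 := by
    intro h
    apply Algebra.discr_not_zero_of_basis ℚ_[p] B.basis
    rw [← hd, h, map_zero]
  have h1 : Algebra.discr ℚ_[p] B.basis • w ∈ Algebra.adjoin ℤ_[p] ({B.gen} : Set K) :=
    Algebra.discr_mul_isIntegral_mem_adjoin (R := ℤ_[p]) (K := ℚ_[p]) (L := K) (hint := hBint) (hz := hw)
  -- replace discriminant by p ^ m
  have hspec := PadicInt.unitCoeff_spec hd0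
  set u := PadicInt.unitCoeff hd0
  set m := d.valuation
  have h2 : (p : ℤ_[p]) ^ m • w ∈ Algebra.adjoin ℤ_[p] ({B.gen} : Set K) := by
    have : (p : ℤ_[p]) ^ m • w = algebraMap ℤ_[p] K ((u⁻¹ : ℤ_[p]ˣ) : ℤ_[p]) *
        (Algebra.discr ℚ_[p] B.basis • w) := by
      rw [← hd, Algebra.smul_def, Algebra.smul_def, ← IsScalarTower.algebraMap_apply,
        ← mul_assoc, ← map_mul]
      congr 2
      rw [hspec]
      ring_nf
      rw [mul_assoc, ← Units.val_mul, inv_mul_cancel, Units.val_one, mul_one]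
    rw [this]
    exact mul_mem (Subalgebra.algebraMap_mem _ _) h1
  have h3 := mem_adjoin_of_smul_prime_pow_smul_of_minpoly_isEisensteinAt
    (K := ℚ_[p]) PadicInt.prime_p hBint hw h2 ?_
  · rwa [hBgen] at h3
  · rw [hBgen, minpoly_kappa p K hθ]
    exact Epoly_isEisenstein p

theorem mem_RO_iff {w : K} : w ∈ RO p K ↔ IsIntegral ℤ_[p] w := Iff.rfl

theorem algebraMap_mem_RO (t : ℤ_[p]) : algebraMap ℤ_[p] K t ∈ RO p K :=
  isIntegral_algebraMap

theorem algebraMapQ_mem_RO {q : ℚ_[p]} (hq : ‖q‖ ≤ 1) : algebraMap ℚ_[p] K q ∈ RO p K := by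
  have : algebraMap ℚ_[p] K q = algebraMap ℤ_[p] K (⟨q, hq⟩ : ℤ_[p]) := by
    refine Eq.trans ?_ (IsScalarTower.algebraMap_apply ℤ_[p] ℚ_[p] K _).symm
    rfl
  rw [this]
  exact algebraMap_mem_RO p K _

theorem intCast_mem_RO (n : ℤ) : (n : K) ∈ RO p K := by
  rw [← map_intCast (algebraMap ℤ_[p] K) n]
  exact algebraMap_mem_RO p K _

theorem theta_mem_RO {θ : K} (hθ : IsPrimitiveRoot θ p) : θ ∈ RO p K := by
  refine ⟨X ^ p - C 1, monic_X_pow_sub_C 1 (Fact.out : p.Prime).ne_zero, ?_⟩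
  simp [hθ.pow_eq_one]

/-- `p/κ ∈ O`. -/
theorem p_div {θ : K} (hθ : IsPrimitiveRoot θ p) :
    (θ - 1)⁻¹ * (p : K) ∈ RO p K := by
  have hp1 : 1 < p := (Fact.out : p.Prime).one_lt
  have hκ0 : θ - 1 ≠ 0 := sub_ne_zero.2 (hθ.ne_one hp1)
  have hθO : θ ∈ RO p K := theta_mem_RO p K hθ
  have hgs : ∑ k ∈ Finset.range p, θ ^ k = 0 := hθ.geom_sum_eq_zero hp1
  have hM : (θ - 1) * (∑ k ∈ Finset.range p, ∑ j ∈ Finset.range k, -θ ^ j) = (p : K) := by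
    rw [Finset.mul_sum]
    have h2 : ∀ k ∈ Finset.range p,
        (θ - 1) * ∑ j ∈ Finset.range k, -θ ^ j = 1 - θ ^ k := by
      intro k _
      have h3 := geom_sum_mul θ k
      have h4 : ∑ j ∈ Finset.range k, -θ ^ j = -∑ j ∈ Finset.range k, θ ^ j := by
        rw [Finset.sum_neg_distrib]
      rw [h4]
      calc (θ - 1) * -∑ j ∈ Finset.range k, θ ^ j
          = -((∑ j ∈ Finset.range k, θ ^ j) * (θ - 1)) := by ring
        _ = 1 - θ ^ k := by rw [h3]; ring
    rw [Finset.sum_congr rfl h2, Finset.sum_sub_distrib, hgs]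
    simp
  have key : (θ - 1)⁻¹ * (p : K) = ∑ k ∈ Finset.range p, ∑ j ∈ Finset.range k, -θ ^ j := by
    rw [← hM, inv_mul_cancel_left₀ hκ0]
  rw [key]
  exact Subalgebra.sum_mem _ fun k _ => Subalgebra.sum_mem _ fun j _ =>
    neg_mem (pow_mem hθO j)

/-- Decomposition of an integral element. -/
theorem dec_RO {θ : K} (hθ : IsPrimitiveRoot θ p)
    (hgen : Algebra.adjoin ℚ_[p] {θ} = ⊤) {w : K} (hw : w ∈ RO p K) :
    ∃ aZ : ℤ_[p], ∃ w', w' ∈ RO p K ∧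
      w = algebraMap ℤ_[p] K aZ + (θ - 1) * w' := by
  have h1 : w ∈ Algebra.adjoin ℤ_[p] ({θ - 1} : Set K) := RO_le_adjoin p K hθ hgen hw
  rw [Algebra.adjoin_singleton_eq_range_aeval] at h1
  obtain ⟨q, hq⟩ := h1
  refine ⟨q.coeff 0, Polynomial.aeval (θ - 1) q.divX, ?_, ?_⟩
  · have : Polynomial.aeval (θ - 1) q.divX ∈ Algebra.adjoin ℤ_[p] ({θ - 1} : Set K) := by
      rw [Algebra.adjoin_singleton_eq_range_aeval]
      exact ⟨q.divX, rfl⟩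
    refine Algebra.adjoin_le ?_ this
    intro t ht
    have ht' : t = θ - 1 := ht
    rw [ht']
    exact sub_mem (theta_mem_RO p K hθ) (one_mem _)
  · have h5 : q.divX * X + C (q.coeff 0) = q := q.divX_mul_X_add
    have := congrArg (Polynomial.aeval (θ - 1)) h5
    rw [map_add, map_mul, aeval_X, aeval_C] at this
    rw [← hq]
    show (Polynomial.aeval (θ - 1)) q = _
    rw [← this]
    ring

/-- Primality of division by `κ`. -/
theorem prim_RO {θ : K} (hθ : IsPrimitiveRoot θ p)
    (hgen : Algebra.adjoin ℚ_[p] {θ} = ⊤)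
    (hkinv : (θ - 1)⁻¹ ∉ RO p K) {u v : K}
    (hu : u ∈ RO p K) (hv : v ∈ RO p K)
    (huv : (θ - 1)⁻¹ * (u * v) ∈ RO p K) (hnu : (θ - 1)⁻¹ * u ∉ RO p K) :
    (θ - 1)⁻¹ * v ∈ RO p K := by
  have hp1 : 1 < p := (Fact.out : p.Prime).one_lt
  have hκ0 : θ - 1 ≠ 0 := sub_ne_zero.2 (hθ.ne_one hp1)
  obtain ⟨au, u', hu', hud⟩ := dec_RO p K hθ hgen hu
  obtain ⟨av, v', hv', hvd⟩ := dec_RO p K hθ hgen hv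
  set κ := θ - 1
  -- κ⁻¹ * (ι au * ι av) ∈ RO
  have hsplit : κ⁻¹ * (u * v) = κ⁻¹ * (algebraMap ℤ_[p] K (au * av)) +
      (algebraMap ℤ_[p] K au * v' + u' * algebraMap ℤ_[p] K av + κ * (u' * v')) := by
    rw [hud, hvd, map_mul]
    field_simp
    ring
  have hab : κ⁻¹ * (algebraMap ℤ_[p] K (au * av)) ∈ RO p K := by
    have h6 : κ⁻¹ * (algebraMap ℤ_[p] K (au * av)) = κ⁻¹ * (u * v) -
        (algebraMap ℤ_[p] K au * v' + u' * algebraMap ℤ_[p] K av + κ * (u' * v')) := by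
      rw [hsplit]; ring
    rw [h6]
    refine sub_mem huv (add_mem (add_mem ?_ ?_) ?_)
    · exact mul_mem (algebraMap_mem_RO p K au) hv'
    · exact mul_mem hu' (algebraMap_mem_RO p K av)
    · exact mul_mem (sub_mem (theta_mem_RO p K hθ) (one_mem _)) (mul_mem hu' hv')
  -- the `ℤ_[p]`-constant divisibility
  have hpdvd : (p : ℤ_[p]) ∣ au * av := by
    by_contra hnd
    have hunit : IsUnit (au * av) := by
      by_contra hnu2
      apply hnd
      have h7 : au * av ∈ nonunits ℤ_[p] := hnu2
      have h8 : au * av ∈ IsLocalRing.maximalIdeal ℤ_[p] := h7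
      rwa [PadicInt.maximalIdeal_eq_span_p, Ideal.mem_span_singleton] at h8
    obtain ⟨w0, hw0⟩ := isUnit_iff_exists_inv.1 hunit
    apply hkinv
    have h9 : κ⁻¹ = (κ⁻¹ * (algebraMap ℤ_[p] K (au * av))) * algebraMap ℤ_[p] K w0 := by
      rw [mul_assoc, ← map_mul, hw0, map_one, mul_one]
    rw [h9]
    exact mul_mem hab (algebraMap_mem_RO p K w0)
  rcases (PadicInt.prime_p).dvd_mul.1 hpdvd with hda | hdb
  · exfalso
    apply hnu
    obtain ⟨a', ha'⟩ := hda
    have h10 : κ⁻¹ * u = (κ⁻¹ * (p : K)) * algebraMap ℤ_[p] K a' + u' := by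
      rw [hud, ha', map_mul, map_natCast]
      field_simp
    rw [h10]
    exact add_mem (mul_mem (p_div p K hθ) (algebraMap_mem_RO p K a')) hu'
  · obtain ⟨a', ha'⟩ := hdb
    have h10 : κ⁻¹ * v = (κ⁻¹ * (p : K)) * algebraMap ℤ_[p] K a' + v' := by
      rw [hvd, ha', map_mul, map_natCast]
      field_simp
    rw [h10]
    exact add_mem (mul_mem (p_div p K hθ) (algebraMap_mem_RO p K a')) hv'

end Aux

/-- Let `γ = c·ϑ_a` with `c` a unit of `O` and
`a ∈ {2,…,(p-1)/2}`, and let `x, y, z ≥ i`.  Then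
`J_γ(e_x, e_y, e_z) ∈ 𝔭^(x+y+z+1)` if and only if
`a^{3i}(1-a)^{2i}·f(x,y,z) + a^{2i}(1-a)^{3i}·g(x,y,z) ≡ 0 mod p`. -/
theorem stmt_19 (p : ℕ) [Fact p.Prime] (hp5 : 5 ≤ p)
    (K : Type) [Field K] [Algebra ℚ_[p] K] [Algebra ℤ_[p] K]
    [IsScalarTower ℤ_[p] ℚ_[p] K]
    (θ : K) (hθ : IsPrimitiveRoot θ p)
    (hgen : Algebra.adjoin ℚ_[p] {θ} = ⊤)
    (i : ℕ)
    (r : ℕ) (hr : orderOf (r : ZMod p) = p - 1)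
    (ω : ℚ_[p]) (hω : IsPrimitiveRoot ω (p - 1)) (hω1 : ‖ω‖ ≤ 1)
    (hωr : ‖ω - (r : ℚ_[p])‖ < 1)
    (σ : K ≃ₐ[ℚ_[p]] K) (hσ : σ θ = θ ^ r)
    -- for `x ∈ ℤ`, `e_x` is an eigenvector of `σ` with `val(e_x) = x`
    (e : ℤ → K)
    (he : ∀ x : ℤ, σ (e x) = algebraMap ℚ_[p] K (ω ^ x) * e x)
    (hev : ∀ x : ℤ, valK p K θ (e x) = (x : WithTop ℤ))
    -- `c` is a unit of `O`, `a ∈ {2,…,(p-1)/2}`, `σ_a = σ^(k_a)`, `σ_{1-a} = σ^(l_a)`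
    (c : K) (hc : c ∈ RO p K) (hcu : c ∉ Pp p K θ 1)
    (a : ℕ) (ha2 : 2 ≤ a) (ha : a ≤ (p - 1) / 2)
    (ka la : ℕ)
    (σa : K ≃ₐ[ℚ_[p]] K) (hσa : σa θ = θ ^ a) (hka : σa = σ ^ ka)
    (σb : K ≃ₐ[ℚ_[p]] K) (hσb : σb θ = θ ^ ((1 : ℤ) - a)) (hlb : σb = σ ^ la)
    -- `γ = c·ϑ_a`
    (γ : K → K → K) (hγdef : γ = fun u v => c * vth p K σa σb u v)
    -- the quantities `t₁(x,y,z)` and `t₂(x,y,z)`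
    (t1 t2 : ℤ → ℤ → ℤ → K)
    (ht1 : ∀ x y z : ℤ, t1 x y z = c * σa c *
      algebraMap ℚ_[p] K (ω ^ (2 * (ka : ℤ) * x) * ω ^ (((ka : ℤ) + la) * y) * ω ^ ((la : ℤ) * z)
        - ω ^ (((ka : ℤ) + la) * x) * ω ^ (2 * (ka : ℤ) * y) * ω ^ ((la : ℤ) * z)))
    (ht2 : ∀ x y z : ℤ, t2 x y z = c * σb c *
      algebraMap ℚ_[p] K (-(ω ^ (((ka : ℤ) + la) * x) * ω ^ (2 * (la : ℤ) * y) * ω ^ ((ka : ℤ) * z))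
        + ω ^ (2 * (la : ℤ) * x) * ω ^ (((ka : ℤ) + la) * y) * ω ^ ((ka : ℤ) * z)))
    -- `f(x,y,z), g(x,y,z) ∈ {0,…,p-1}` are defined by
    -- `t₁(x,y,z)+t₁(y,z,x)+t₁(z,x,y) ≡ c²a^{3i}(1-a)^{2i}·f(x,y,z) mod 𝔭` and
    -- `t₂(x,y,z)+t₂(y,z,x)+t₂(z,x,y) ≡ c²a^{2i}(1-a)^{3i}·g(x,y,z) mod 𝔭`
    (F G : ℤ → ℤ → ℤ → ℕ)
    (hF : ∀ x y z : ℤ, F x y z < p ∧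
      t1 x y z + t1 y z x + t1 z x y
          - c ^ 2 * (a : K) ^ (3 * i) * (1 - (a : K)) ^ (2 * i) * (F x y z : K)
        ∈ Pp p K θ 1)
    (hG : ∀ x y z : ℤ, G x y z < p ∧
      t2 x y z + t2 y z x + t2 z x y
          - c ^ 2 * (a : K) ^ (2 * i) * (1 - (a : K)) ^ (3 * i) * (G x y z : K)
        ∈ Pp p K θ 1) :
    ∀ x y z : ℤ, (i : ℤ) ≤ x → (i : ℤ) ≤ y → (i : ℤ) ≤ z →
      (Jg K γ (e x) (e y) (e z) ∈ Pp p K θ (x + y + z + 1) ↔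
        (a : ZMod p) ^ (3 * i) * (1 - (a : ZMod p)) ^ (2 * i) * (F x y z : ZMod p)
          + (a : ZMod p) ^ (2 * i) * (1 - (a : ZMod p)) ^ (3 * i) * (G x y z : ZMod p)
          = 0) := by
  intro x y z _ _ _
  have hp : p.Prime := Fact.out
  have hp1 : 1 < p := hp.one_lt
  have hpm1 : p - 1 ≠ 0 := by omega
  have hω0 : ω ≠ 0 := hω.ne_zero hpm1
  have hκ0 : θ - 1 ≠ 0 := sub_ne_zero.2 (hθ.ne_one hp1)
  -- membership in Pp unfolded
  have hPpmem : ∀ (n : ℤ) (v : K), v ∈ Pp p K θ n ↔ (θ - 1) ^ (-n) * v ∈ RO p K :=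
    fun n v => Iff.rfl
  -- the valuations of the eigenvectors
  have hev' : ∀ w : ℤ, e w ∈ Pp p K θ w ∧ e w ∉ Pp p K θ (w + 1) := by
    intro w
    have h := hev w
    rw [valK] at h
    split_ifs at h with hc
    · have h2 : hc.choose = w := by exact_mod_cast h
      obtain ⟨m1, m2⟩ := hc.choose_spec
      rw [h2] at m1 m2
      exact ⟨m1, m2⟩
    · simp at h
  -- κ⁻¹ is not integral
  have hkinv : (θ - 1)⁻¹ ∉ RO p K := by
    intro hsome
    have h1 := (hPpmem 0 (e 0)).1 (hev' 0).1
    rw [neg_zero, zpow_zero, one_mul] at h1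
    apply (hev' 0).2
    rw [hPpmem]
    have : (θ - 1) ^ (-(0 + 1) : ℤ) * e 0 = (θ - 1)⁻¹ * e 0 := by
      norm_num
    rw [this]
    exact mul_mem hsome h1
  -- norm of ω
  have hωnorm : ‖ω‖ = 1 := by
    refine le_antisymm hω1 ?_
    by_contra h
    push_neg at h
    have h2 : ‖ω‖ ^ (p - 1) < 1 := pow_lt_one₀ (norm_nonneg ω) h hpm1
    rw [← norm_pow, hω.pow_eq_one, norm_one] at h2
    exact lt_irrefl _ h2
  have hRO1 : ∀ n : ℤ, algebraMap ℚ_[p] K (ω ^ n) ∈ RO p K := fun n =>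
    algebraMapQ_mem_RO p K (by rw [_root_.norm_zpow, hωnorm, one_zpow])
  -- automorphisms preserve the ring of integers
  have hmapRO : ∀ (τ : K ≃ₐ[ℚ_[p]] K) (w : K), w ∈ RO p K → τ w ∈ RO p K := by
    intro τ w hw
    have h3 : τ w = ((τ.restrictScalars ℤ_[p]).toAlgHom : K →ₐ[ℤ_[p]] K) w := rfl
    rw [h3]
    exact IsIntegral.map _ hw
  -- powers of σ on eigenvectors
  have hσk : ∀ (k : ℕ) (w : ℤ), (σ ^ k) (e w) =
      algebraMap ℚ_[p] K (ω ^ ((k : ℤ) * w)) * e w := by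
    intro k
    induction k with
    | zero => intro w; simp
    | succ k ih =>
      intro w
      have h1 : (σ ^ (k + 1)) (e w) = (σ ^ k) (σ (e w)) := by
        rw [pow_succ, AlgEquiv.mul_apply]
      rw [h1, he w, map_mul, AlgEquiv.commutes, ih w, ← mul_assoc, ← map_mul,
        ← zpow_add₀ hω0]
      have h2 : w + (k : ℤ) * w = ((k + 1 : ℕ) : ℤ) * w := by push_cast; ring
      rw [h2]
  have hσae : ∀ w : ℤ, σa (e w) = algebraMap ℚ_[p] K (ω ^ ((ka : ℤ) * w)) * e w := by
    intro w; rw [hka]; exact hσk ka w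
  have hσbe : ∀ w : ℤ, σb (e w) = algebraMap ℚ_[p] K (ω ^ ((la : ℤ) * w)) * e w := by
    intro w; rw [hlb]; exact hσk la w
  have hι : ∀ s t : ℚ_[p], algebraMap ℚ_[p] K (s * t)
      = algebraMap ℚ_[p] K s * algebraMap ℚ_[p] K t := fun s t => map_mul _ s t
  -- the Jacobi element in terms of t1 and t2
  have key : Jg K γ (e x) (e y) (e z) =
      (t1 x y z + t1 y z x + t1 z x y + (t2 x y z + t2 y z x + t2 z x y)) *
        (e x * e y * e z) := by
    simp only [Jg, hγdef, vth, map_mul, map_sub, AlgEquiv.commutes, hσae, hσbe, ht1, ht2]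
    simp only [show ∀ w : ℤ, 2 * (ka : ℤ) * w = ka * w + ka * w from fun w => by ring,
      show ∀ w : ℤ, ((ka : ℤ) + la) * w = ka * w + la * w from fun w => by ring,
      show ∀ w : ℤ, 2 * (la : ℤ) * w = la * w + la * w from fun w => by ring,
      zpow_add₀ hω0, map_mul, map_sub, map_add, map_neg]
    ring
  -- integrality of t1 and t2
  have ht1m : ∀ u v w : ℤ, t1 u v w ∈ RO p K := by
    intro u v w
    rw [ht1, map_sub, map_mul, map_mul, map_mul, map_mul]
    exact mul_mem (mul_mem hc (hmapRO σa c hc))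
      (sub_mem (mul_mem (mul_mem (hRO1 _) (hRO1 _)) (hRO1 _))
        (mul_mem (mul_mem (hRO1 _) (hRO1 _)) (hRO1 _)))
  have ht2m : ∀ u v w : ℤ, t2 u v w ∈ RO p K := by
    intro u v w
    rw [ht2, map_add, map_neg, map_mul, map_mul, map_mul, map_mul]
    exact mul_mem (mul_mem hc (hmapRO σb c hc))
      (add_mem (neg_mem (mul_mem (mul_mem (hRO1 _) (hRO1 _)) (hRO1 _)))
        (mul_mem (mul_mem (hRO1 _) (hRO1 _)) (hRO1 _)))
  set S : K := t1 x y z + t1 y z x + t1 z x y + (t2 x y z + t2 y z x + t2 z x y) with hSdef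
  have hSRO : S ∈ RO p K :=
    add_mem (add_mem (add_mem (ht1m _ _ _) (ht1m _ _ _)) (ht1m _ _ _))
      (add_mem (add_mem (ht2m _ _ _) (ht2m _ _ _)) (ht2m _ _ _))
  -- the integer N
  set N : ℤ := (a : ℤ) ^ (3 * i) * (1 - (a : ℤ)) ^ (2 * i) * (F x y z : ℤ)
    + (a : ℤ) ^ (2 * i) * (1 - (a : ℤ)) ^ (3 * i) * (G x y z : ℤ) with hNdef
  have hNK : (N : K) ∈ RO p K := intCast_mem_RO p K N
  -- difference S - c² N is divisible by κ
  have hdiff : (θ - 1)⁻¹ * (S - c ^ 2 * (N : K)) ∈ RO p K := by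
    have h1 := (hPpmem 1 _).1 (hF x y z).2
    have h2 := (hPpmem 1 _).1 (hG x y z).2
    rw [zpow_neg_one] at h1 h2
    have h3 : (θ - 1)⁻¹ * (S - c ^ 2 * (N : K)) =
        (θ - 1)⁻¹ * (t1 x y z + t1 y z x + t1 z x y
          - c ^ 2 * (a : K) ^ (3 * i) * (1 - (a : K)) ^ (2 * i) * (F x y z : K))
        + (θ - 1)⁻¹ * (t2 x y z + t2 y z x + t2 z x y
          - c ^ 2 * (a : K) ^ (2 * i) * (1 - (a : K)) ^ (3 * i) * (G x y z : K)) := by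
      rw [hSdef, hNdef]
      push_cast
      ring
    rw [h3]
    exact add_mem h1 h2
  -- the non-divisibility facts
  have hcnd : (θ - 1)⁻¹ * c ∉ RO p K := by
    intro h
    exact hcu ((hPpmem 1 c).2 (by rwa [zpow_neg_one]))
  set Ux : K := (θ - 1) ^ (-x) * e x with hUxdef
  set Uy : K := (θ - 1) ^ (-y) * e y with hUydef
  set Uz : K := (θ - 1) ^ (-z) * e z with hUzdef
  have hUx : Ux ∈ RO p K := (hPpmem x (e x)).1 (hev' x).1
  have hUy : Uy ∈ RO p K := (hPpmem y (e y)).1 (hev' y).1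
  have hUz : Uz ∈ RO p K := (hPpmem z (e z)).1 (hev' z).1
  have hUnd : ∀ w : ℤ, (θ - 1)⁻¹ * ((θ - 1) ^ (-w) * e w) ∉ RO p K := by
    intro w h
    apply (hev' w).2
    rw [hPpmem]
    have h4 : (θ - 1) ^ (-(w + 1)) * e w = (θ - 1)⁻¹ * ((θ - 1) ^ (-w) * e w) := by
      rw [show -(w + 1) = -1 + -w by ring, zpow_add₀ hκ0, zpow_neg_one, mul_assoc]
    rw [h4]
    exact h
  -- step 1 : reduce to divisiblity of S * Ux * Uy * Uz
  have step1 : Jg K γ (e x) (e y) (e z) ∈ Pp p K θ (x + y + z + 1) ↔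
      (θ - 1)⁻¹ * (S * (Ux * Uy * Uz)) ∈ RO p K := by
    rw [hPpmem, key]
    have hEQ : (θ - 1) ^ (-(x + y + z + 1)) * (S * (e x * e y * e z)) =
        (θ - 1)⁻¹ * (S * (Ux * Uy * Uz)) := by
      rw [hUxdef, hUydef, hUzdef,
        show -(x + y + z + 1) = -1 + (-x + (-y + -z)) by ring,
        zpow_add₀ hκ0, zpow_add₀ hκ0, zpow_add₀ hκ0, zpow_neg_one]
      ring
    rw [hEQ]
  -- step 2 : cancel the units Ux, Uy, Uz
  have step2 : (θ - 1)⁻¹ * (S * (Ux * Uy * Uz)) ∈ RO p K ↔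
      (θ - 1)⁻¹ * S ∈ RO p K := by
    constructor
    · intro h
      have l1 : (θ - 1)⁻¹ * (Uz * (S * Ux * Uy)) ∈ RO p K := by
        have : (θ - 1)⁻¹ * (Uz * (S * Ux * Uy)) = (θ - 1)⁻¹ * (S * (Ux * Uy * Uz)) := by
          ring
        rw [this]; exact h
      have v1 := prim_RO p K hθ hgen hkinv hUz (mul_mem (mul_mem hSRO hUx) hUy) l1 (hUnd z)
      have l2 : (θ - 1)⁻¹ * (Uy * (S * Ux)) ∈ RO p K := by
        have : (θ - 1)⁻¹ * (Uy * (S * Ux)) = (θ - 1)⁻¹ * (S * Ux * Uy) := by ring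
        rw [this]; exact v1
      have v2 := prim_RO p K hθ hgen hkinv hUy (mul_mem hSRO hUx) l2 (hUnd y)
      have l3 : (θ - 1)⁻¹ * (Ux * S) ∈ RO p K := by
        have : (θ - 1)⁻¹ * (Ux * S) = (θ - 1)⁻¹ * (S * Ux) := by ring
        rw [this]; exact v2
      exact prim_RO p K hθ hgen hkinv hUx hSRO l3 (hUnd x)
    · intro h
      have : (θ - 1)⁻¹ * (S * (Ux * Uy * Uz)) = ((θ - 1)⁻¹ * S) * (Ux * Uy * Uz) := by
        ring
      rw [this]
      exact mul_mem h (mul_mem (mul_mem hUx hUy) hUz)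
  -- step 3 : replace S by c² N
  have step3 : (θ - 1)⁻¹ * S ∈ RO p K ↔ (θ - 1)⁻¹ * (c ^ 2 * (N : K)) ∈ RO p K := by
    constructor
    · intro h
      have : (θ - 1)⁻¹ * (c ^ 2 * (N : K)) =
          (θ - 1)⁻¹ * S - (θ - 1)⁻¹ * (S - c ^ 2 * (N : K)) := by ring
      rw [this]
      exact sub_mem h hdiff
    · intro h
      have : (θ - 1)⁻¹ * S =
          (θ - 1)⁻¹ * (c ^ 2 * (N : K)) + (θ - 1)⁻¹ * (S - c ^ 2 * (N : K)) := by ring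
      rw [this]
      exact add_mem h hdiff
  -- step 4 : cancel the unit c²
  have step4 : (θ - 1)⁻¹ * (c ^ 2 * (N : K)) ∈ RO p K ↔ (θ - 1)⁻¹ * (N : K) ∈ RO p K := by
    constructor
    · intro h
      have l1 : (θ - 1)⁻¹ * (c * (c * (N : K))) ∈ RO p K := by
        have : (θ - 1)⁻¹ * (c * (c * (N : K))) = (θ - 1)⁻¹ * (c ^ 2 * (N : K)) := by ring
        rw [this]; exact h
      have v1 := prim_RO p K hθ hgen hkinv hc (mul_mem hc hNK) l1 hcnd
      exact prim_RO p K hθ hgen hkinv hc hNK v1 hcnd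
    · intro h
      have : (θ - 1)⁻¹ * (c ^ 2 * (N : K)) = c ^ 2 * ((θ - 1)⁻¹ * (N : K)) := by ring
      rw [this]
      exact mul_mem (pow_mem hc 2) h
  -- step 5 : divisibility by κ of an integer is divisibility by p
  have step5 : (θ - 1)⁻¹ * (N : K) ∈ RO p K ↔ (p : ℤ) ∣ N := by
    constructor
    · intro h
      by_contra hnd
      have hcop : IsCoprime (p : ℤ) N := by
        rw [Int.isCoprime_iff_gcd_eq_one]
        have hnd' : ¬(p ∣ N.natAbs) := by
          intro hd
          exact hnd ((Int.dvd_natAbs).1 (Int.natCast_dvd_natCast.2 hd))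
        exact (Nat.Prime.coprime_iff_not_dvd hp).2 hnd'
      obtain ⟨α, β, hαβ⟩ := hcop
      apply hkinv
      have hc1 : (α : K) * (p : K) + (β : K) * (N : K) = 1 := by
        exact_mod_cast congrArg (Int.cast : ℤ → K) hαβ
      have h6 : (θ - 1)⁻¹ =
          (α : K) * ((θ - 1)⁻¹ * (p : K)) + (β : K) * ((θ - 1)⁻¹ * (N : K)) := by
        have h8 : (α : K) * ((θ - 1)⁻¹ * (p : K)) + (β : K) * ((θ - 1)⁻¹ * (N : K)) =
            (θ - 1)⁻¹ * ((α : K) * (p : K) + (β : K) * (N : K)) := by ring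
        rw [h8, hc1, mul_one]
      rw [h6]
      exact add_mem (mul_mem (intCast_mem_RO p K α) (p_div p K hθ))
        (mul_mem (intCast_mem_RO p K β) h)
    · rintro ⟨M, hM⟩
      have h7 : (θ - 1)⁻¹ * (N : K) = ((θ - 1)⁻¹ * (p : K)) * (M : K) := by
        rw [hM]
        push_cast
        ring
      rw [h7]
      exact mul_mem (p_div p K hθ) (intCast_mem_RO p K M)
  -- conclude
  rw [step1, step2, step3, step4, step5, ← ZMod.intCast_zmod_eq_zero_iff_dvd, hNdef]
  push_cast
  rfl
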